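/- arXiv:1711.07887 — 2 statements merged into one kernel-verified Lean document; each statement's English description precedes it below -/
import Mathlib

section
/- Let j and k be positive integers with j ≤ k, let c, z ∈ ℂ, and for each i ∈ {1,…,k} let r_i ∈ ℂ with |r_i| > 1. Let f_j(w) = exp(c·w^j). Then the alternating product over all 2^k subsets S of {1,…,k} (including the empty set, with P(f_j, ∅, z) = f_j(z)) satisfies ∏_{S ⊆ {1,…,k}} P(f_j, S, z)^{(−1)^{|S|−1}} = 1, i.e., Q(f_j, F_{≤k}, z) = 1, where each geometric sampling product P(f_j, S, z) converges unconditionally. -/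
/-- Geometric sampling point `X_{k,n}(r) = (r^k - 1)^{1/k} / r^n` (principal branch). -/
noncomputable def X (k n : ℕ) (r : ℂ) : ℂ := (r ^ k - 1) ^ ((k : ℂ))⁻¹ / r ^ n

/-- Geometric sampling product `P(f, S, z)`. -/
noncomputable def P (f : ℂ → ℂ) (r : ℕ → ℂ) (S : Finset ℕ) (z : ℂ) : ℂ :=
  ∏' ν : {x // x ∈ S} → ℕ+, f ((∏ k : {x // x ∈ S}, X k.1 (ν k : ℕ) (r k.1)) * z)

/-- Geometric sampling quotient `Q(f, F, z) = ∏_{S ∈ F} P(f,S,z)^{(-1)^{|S|-1}}`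
(the exponent `(-1)^{|S|+1}` agrees with `(-1)^{|S|-1}`, also for `S = ∅`). -/
noncomputable def Q (f : ℂ → ℂ) (r : ℕ → ℂ) (F : Finset (Finset ℕ)) (z : ℂ) : ℂ :=
  ∏ S ∈ F, P f r S z ^ ((-1 : ℤ) ^ (S.card + 1))

/-!
Because `exp` turns the sum over sampling tuples into a product,
`P(f_j, S, z) = exp (c z^j ∑_ν ∏_{i ∈ S} X_{i,ν_i}(r_i)^j) = exp (c z^j ∏_{i ∈ S} s_i)`, where
`s_i = ∑_{n ≥ 1} X_{i,n}(r_i)^j` is a geometric series, so the multiple series converges absolutely.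
Hence `Q = exp (c z^j ∑_S (-1)^{|S|+1} ∏_{i ∈ S} s_i) = exp (-c z^j ∏_{i=1}^k (1 - s_i))`, and the
factor `i = j` vanishes because `X_{j,n}(r)^j = (r^j - 1) r^{-jn}` sums to `s_j = 1`.
-/

open Finset

theorem summable_norm_pi_prod_and_hasSum {κ β R : Type*} [Fintype κ] [NormedCommRing R]
    [CompleteSpace R] (g : κ → β → R) (hg : ∀ i, Summable fun n => ‖g i n‖) :
    Summable (fun ν : κ → β => ‖∏ i, g i (ν i)‖) ∧
      HasSum (fun ν : κ → β => ∏ i, g i (ν i)) (∏ i, ∑' n, g i n) := by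
  have hall := Fintype.induction_empty_option (P := fun κ (_ : Fintype κ) => ∀ g : κ → β → R,
    (∀ i, Summable fun n => ‖g i n‖) → Summable (fun ν : κ → β => ‖∏ i, g i (ν i)‖) ∧
      HasSum (fun ν : κ → β => ∏ i, g i (ν i)) (∏ i, ∑' n, g i n)) ?_ ?_ ?_
  · exact hall κ g hg
  · intro α γ _ e ih g hg
    let _ := Fintype.ofEquiv γ e.symm
    let E : (α → β) ≃ (γ → β) := e.arrowCongr (Equiv.refl β)
    have hcomp (μ : α → β) : ∏ b, g b (E μ b) = ∏ a, g (e a) (μ a) :=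
      (e.prod_comp fun b => g b (E μ b)).symm.trans (by simp [E])
    rw [← E.summable_iff, ← E.hasSum_iff, ← e.prod_comp]
    simp only [Function.comp_def, hcomp]
    exact ih (fun a => g (e a)) (fun a => hg (e a))
  · intro g _
    simp only [univ_eq_empty, prod_empty]
    exact ⟨(hasSum_unique _).summable, hasSum_unique _⟩
  · intro α _ ih g hg
    obtain ⟨hnorm, hsum⟩ := ih (fun a => g (some a)) (fun a => hg (some a))
    let E : (Option α → β) ≃ β × (α → β) := Equiv.piOptionEquivProd
    have hsplit (p : β × (α → β)) :
        ∏ i, g i (E.symm p i) = g none p.1 * ∏ a, g (some a) (p.2 a) :=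
      Fintype.prod_option _
    rw [← E.symm.summable_iff, ← E.symm.hasSum_iff, Fintype.prod_option]
    simp only [Function.comp_def, hsplit]
    have hnorm' := (hg none).mul_norm hnorm
    have hmul := summable_mul_of_summable_norm (hg none) hnorm
    have hsum' := (hg none).of_norm.hasSum.mul hsum hmul
    exact ⟨hnorm', hsum'⟩

lemma norm_inv_pow_lt_one {𝕜 : Type*} [NormedDivisionRing 𝕜] {ρ : 𝕜} (hρ : 1 < ‖ρ‖) {j : ℕ}
    (hj : j ≠ 0) : ‖(ρ ^ j)⁻¹‖ < 1 := by
  rw [norm_inv, norm_pow]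
  exact inv_lt_one_of_one_lt₀ (one_lt_pow₀ hρ hj)

section Geometric

variable {ρ : ℂ} {j : ℕ}

lemma X_pow (i n : ℕ) (ρ : ℂ) (j : ℕ) :
    X i n ρ ^ j = ((ρ ^ i - 1) ^ (i : ℂ)⁻¹) ^ j * ((ρ ^ j)⁻¹) ^ n := by
  rw [X, div_pow, div_eq_mul_inv, ← inv_pow, ← inv_pow, ← pow_right_comm, inv_pow ρ, inv_pow]

lemma summable_norm_X_pow (hρ : 1 < ‖ρ‖) (hj : j ≠ 0) (i : ℕ) :
    Summable fun n : ℕ+ => ‖X i n ρ ^ j‖ := by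
  have hgeom := summable_geometric_of_lt_one (norm_nonneg _) (norm_inv_pow_lt_one hρ hj)
  simpa [X_pow, norm_mul, norm_pow] using
    (summable_pnat_iff_summable_nat.mpr hgeom).mul_left (‖(ρ ^ i - 1) ^ (i : ℂ)⁻¹‖ ^ j)

lemma tsum_X_pow_self (hρ : 1 < ‖ρ‖) (hj : j ≠ 0) : ∑' n : ℕ+, X j n ρ ^ j = 1 := by
  set w := ρ ^ j
  have hw : 1 < ‖w‖ := by simpa [w] using one_lt_pow₀ hρ hj
  have hw0 : w ≠ 0 := norm_pos_iff.mp (by linarith)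
  have hw1 : w - 1 ≠ 0 := by rintro h; simp [sub_eq_zero.mp h] at hw
  have hgeom : HasSum (fun n : ℕ+ => w⁻¹ ^ (n : ℕ)) ((1 - w⁻¹)⁻¹ - 1) :=
    hasSum_pnat_iff.mpr (by
      rw [pow_zero, sub_add_cancel]
      exact hasSum_geometric_of_norm_lt_one (norm_inv_pow_lt_one hρ hj))
  simp only [X_pow, Complex.cpow_nat_inv_pow _ hj]
  rw [(hgeom.mul_left (w - 1)).tsum_eq]
  field_simp
  ring

end Geometric

theorem hasProd_exp_mul_prod_X_pow (c z : ℂ) (r : ℕ → ℂ) {j : ℕ} (hj : j ≠ 0) (S : Finset ℕ)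
    (hr : ∀ i ∈ S, 1 < ‖r i‖) :
    HasProd (fun ν : S → ℕ+ => Complex.exp (c * ((∏ i : S, X i (ν i : ℕ) (r i)) * z) ^ j))
      (Complex.exp (c * z ^ j * ∏ i ∈ S, ∑' n : ℕ+, X i n (r i) ^ j)) := by
  obtain ⟨-, hsum⟩ := summable_norm_pi_prod_and_hasSum (fun (i : S) (n : ℕ+) => X i n (r i) ^ j)
    fun i => summable_norm_X_pow (hr i i.2) hj i
  have hexp := (hsum.mul_left (c * z ^ j)).cexp
  rw [prod_coe_sort S fun i => ∑' n : ℕ+, X i n (r i) ^ j] at hexp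
  convert hexp using 1
  ext ν
  rw [Function.comp_apply, mul_pow, ← prod_pow]
  congr 1
  ring

theorem sum_powerset_neg_one_pow_mul_prod {ι R : Type*} [CommRing R] (T : Finset ι) (s : ι → R) :
    ∑ S ∈ T.powerset, (-1) ^ (#S + 1) * ∏ i ∈ S, s i = -∏ i ∈ T, (1 - s i) := by
  simp only [sub_eq_add_neg, prod_one_add, prod_neg, ← sum_neg_distrib, pow_succ]
  exact sum_congr rfl fun S _ => by ring

/-- for `1 ≤ j ≤ k`, the function factor `f_j(w) = exp (c * w^j)`, and ratios
`r_i` with `|r_i| > 1` for `i ∈ {1,…,k}`, every geometric sampling product `P(f_j, S, z)`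
for `S ⊆ {1,…,k}` converges unconditionally, and the alternating product over all `2^k`
subsets of `{1,…,k}` (including `∅`) is `Q(f_j, F_{≤ k}, z) = 1`. -/
theorem stmt_3 (j k : ℕ) (hj : 1 ≤ j) (hjk : j ≤ k) (c z : ℂ)
    (r : ℕ → ℂ) (hr : ∀ i ∈ Finset.Icc 1 k, 1 < ‖r i‖) :
    (∀ S ∈ (Finset.Icc 1 k).powerset,
      Multipliable (fun ν : {x // x ∈ S} → ℕ+ =>
        Complex.exp (c * ((∏ i : {x // x ∈ S}, X i.1 (ν i : ℕ) (r i.1)) * z) ^ j))) ∧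
    Q (fun w => Complex.exp (c * w ^ j)) r ((Finset.Icc 1 k).powerset) z = 1 := by
  have hj0 : j ≠ 0 := Nat.one_le_iff_ne_zero.mp hj
  set s : ℕ → ℂ := fun i => ∑' n : ℕ+, X i n (r i) ^ j
  have hP (S) (hS : S ∈ (Icc 1 k).powerset) := hasProd_exp_mul_prod_X_pow c z r hj0 S
    fun i hi => hr i (mem_powerset.mp hS hi)
  refine ⟨fun S hS => (hP S hS).multipliable, ?_⟩
  have hj_mem : j ∈ Icc 1 k := mem_Icc.mpr ⟨hj, hjk⟩
  calc Q (fun w => Complex.exp (c * w ^ j)) r (Icc 1 k).powerset z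
      = ∏ S ∈ (Icc 1 k).powerset,
          Complex.exp (((-1) ^ (#S + 1) : ℤ) * (c * z ^ j * ∏ i ∈ S, s i)) :=
        prod_congr rfl fun S hS => by rw [P, (hP S hS).tprod_eq, Complex.exp_int_mul]
    _ = Complex.exp (c * z ^ j * -∏ i ∈ Icc 1 k, (1 - s i)) := by
        rw [← Complex.exp_sum, ← sum_powerset_neg_one_pow_mul_prod, mul_sum]
        push_cast
        exact congrArg _ (sum_congr rfl fun S _ => by ring)
    _ = 1 := by
        rw [prod_eq_zero hj_mem (by simp [s, tsum_X_pow_self (hr j hj_mem) hj0]), neg_zero,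
          mul_zero, Complex.exp_zero]
end

section
/- Let j and k be positive integers with j ≤ k, let c, z ∈ ℂ, and for each i ∈ {1,…,k} let r_i ∈ ℂ with |r_i| > 1. Let f_j(w) = exp(c·w^j). Then exp(c·z^j) = ∏_{m=1}^{k} Q(f_j, F*_{max=m}, z) = ∏_{m=1}^{k} ∏_{S ⊆ {1,…,m}, m ∈ S} P(f_j, S, z)^{(−1)^{|S|−1}}, where each geometric sampling product P(f_j, S, z) converges unconditionally. -/
/-- `F*_{max = m}`: the family of subsets of `{1, …, m}` containing `m`. -/
def Fmax (m : ℕ) : Finset (Finset ℕ) :=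
  ((Finset.Icc 1 m).powerset).filter (fun S => m ∈ S)

open Finset Filter Topology Complex

section PiProduct

variable {ι κ R : Type*} [Fintype ι]

theorem subset_piFinset_biUnion_image [DecidableEq ι] [DecidableEq κ] (u : Finset (ι → κ)) :
    u ⊆ Fintype.piFinset fun _ => u.biUnion fun ν => univ.image ν := fun ν hν =>
  Fintype.mem_piFinset.2 fun i => mem_biUnion.2 ⟨ν, hν, mem_image_of_mem ν (mem_univ i)⟩

variable [NormedCommRing R] [NormOneClass R]

theorem summable_norm_pi_prod {g : ι → κ → R} (hg : ∀ i, Summable fun n => ‖g i n‖) :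
    Summable fun ν : ι → κ => ‖∏ i, g i (ν i)‖ := by
  classical
  have hbound (u : Finset (ι → κ)) : ∑ ν ∈ u, ∏ i, ‖g i (ν i)‖ ≤ ∏ i, ∑' n, ‖g i n‖ := by
    set t := u.biUnion fun ν => univ.image ν
    calc ∑ ν ∈ u, ∏ i, ‖g i (ν i)‖
        ≤ ∑ ν ∈ Fintype.piFinset fun _ => t, ∏ i, ‖g i (ν i)‖ :=
          sum_le_sum_of_subset_of_nonneg (subset_piFinset_biUnion_image u)
            fun _ _ _ => by positivity
      _ = ∏ i, ∑ n ∈ t, ‖g i n‖ := sum_prod_piFinset t fun i n => ‖g i n‖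
      _ ≤ ∏ i, ∑' n, ‖g i n‖ := prod_le_prod (fun _ _ => by positivity)
          fun i _ => (hg i).sum_le_tsum t fun _ _ => norm_nonneg _
  exact (summable_of_sum_le (fun _ => by positivity) hbound).of_nonneg_of_le
    (fun _ => norm_nonneg _) fun ν => norm_prod_le _ _

theorem hasSum_pi_prod [CompleteSpace R] {g : ι → κ → R}
    (hg : ∀ i, Summable fun n => ‖g i n‖) :
    HasSum (fun ν : ι → κ => ∏ i, g i (ν i)) (∏ i, ∑' n, g i n) := by
  classical
  have hcofinal : Tendsto (fun t : Finset κ => Fintype.piFinset fun _ : ι => t) atTop atTop :=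
    tendsto_atTop_atTop.2 fun u => ⟨_, fun t ht =>
      (subset_piFinset_biUnion_image u).trans (Fintype.piFinset_subset _ _ fun _ => ht)⟩
  have hpartial : Tendsto (fun t : Finset κ => ∑ ν ∈ Fintype.piFinset fun _ : ι => t,
      ∏ i, g i (ν i)) atTop (𝓝 (∏ i, ∑' n, g i n)) := by
    simp only [sum_prod_piFinset]
    exact tendsto_finsetProd _ fun i _ => (hg i).of_norm.hasSum
  exact hasSum_of_subseq_of_summable (E := R) (summable_norm_pi_prod hg) hcofinal hpartial

end PiProduct

theorem sum_Fmax_alternating_prod {R : Type*} [CommRing R] {m : ℕ} (hm : 1 ≤ m) (A : ℕ → R) :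
    ∑ S ∈ Fmax m, (-1) ^ (#S + 1) * ∏ i ∈ S, A i = A m * ∏ i ∈ Ico 1 m, (1 - A i) := by
  have hm' : m ∉ Ico 1 m := by simp
  rw [Fmax, sum_filter, ← Ico_insert_right hm, sum_powerset_insert hm', prod_sub, mul_sum]
  have hfalse : ∀ t ∈ (Ico 1 m).powerset, m ∉ t := fun t ht hmt => hm' (mem_powerset.1 ht hmt)
  rw [sum_eq_zero fun t ht => if_neg (hfalse t ht), zero_add]
  refine sum_congr rfl fun t ht => ?_
  rw [if_pos (mem_insert_self m t), card_insert_of_notMem (hfalse t ht),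
    prod_insert (hfalse t ht)]
  simp only [prod_const_one, mul_one, pow_succ]
  ring

theorem sum_Icc_sum_Fmax_alternating_prod {R : Type*} [CommRing R] (k : ℕ) (A : ℕ → R) :
    ∑ m ∈ Icc 1 k, ∑ S ∈ Fmax m, (-1) ^ (#S + 1) * ∏ i ∈ S, A i =
      1 - ∏ i ∈ Icc 1 k, (1 - A i) := by
  rw [prod_one_sub_ordered, sub_sub_cancel]
  refine sum_congr rfl fun m hm => ?_
  have hIco : {i ∈ Icc 1 k | i < m} = Ico 1 m := by
    ext i; simp only [mem_filter, mem_Icc, mem_Ico] at hm ⊢; omega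
  rw [sum_Fmax_alternating_prod (mem_Icc.1 hm).1, hIco]

theorem pow_ne_one_of_one_lt_norm {𝕜 : Type*} [NormedDivisionRing 𝕜] {r : 𝕜} (hr : 1 < ‖r‖)
    {j : ℕ} (hj : j ≠ 0) : r ^ j ≠ 1 :=
  fun h => (one_lt_pow₀ hr hj).ne' (by rw [← norm_pow, h, norm_one])

theorem hasSum_X_pow (i : ℕ) {j : ℕ} {r : ℂ} (hr : 1 < ‖r‖) (hj : j ≠ 0) :
    HasSum (fun n : ℕ+ => X i n r ^ j) (((r ^ i - 1) ^ (i : ℂ)⁻¹) ^ j / (r ^ j - 1)) := by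
  set C := ((r ^ i - 1) ^ (i : ℂ)⁻¹) ^ j
  have hw : ‖(r ^ j)⁻¹‖ < 1 := by
    rw [norm_inv, norm_pow]; exact inv_lt_one_of_one_lt₀ (one_lt_pow₀ hr hj)
  have hr0 : r ≠ 0 := norm_pos_iff.1 (one_pos.trans hr)
  have hrj1 : r ^ j - 1 ≠ 0 := sub_ne_zero.2 (pow_ne_one_of_one_lt_norm hr hj)
  have hgeom := (hasSum_geometric_of_norm_lt_one hw).mul_left (C * (r ^ j)⁻¹)
  rw [show C * (r ^ j)⁻¹ * (1 - (r ^ j)⁻¹)⁻¹ = C / (r ^ j - 1) by field_simp] at hgeom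
  refine (Equiv.pnatEquivNat.symm.hasSum_iff).1 (hgeom.congr_fun fun n => ?_)
  simp only [Function.comp_apply, Equiv.pnatEquivNat_symm_apply, Nat.succPNat_coe,
    Nat.succ_eq_add_one, X, div_pow, ← pow_mul]
  rw [mul_assoc, ← pow_succ', inv_pow, ← pow_mul, mul_comm j, div_eq_mul_inv]

theorem hasSum_X_pow_self {j : ℕ} {r : ℂ} (hr : 1 < ‖r‖) (hj : j ≠ 0) :
    HasSum (fun n : ℕ+ => X j n r ^ j) 1 := by
  have hrj1 : r ^ j - 1 ≠ 0 := sub_ne_zero.2 (pow_ne_one_of_one_lt_norm hr hj)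
  simpa [cpow_nat_inv_pow _ hj, div_self hrj1] using hasSum_X_pow j hr hj

theorem Q_eq_exp_sum {f : ℂ → ℂ} {r : ℕ → ℂ} {F : Finset (Finset ℕ)} {z : ℂ}
    (a : Finset ℕ → ℂ) (h : ∀ S ∈ F, P f r S z = cexp (a S)) :
    Q f r F z = cexp (∑ S ∈ F, (-1) ^ (#S + 1) * a S) := by
  rw [Q, exp_sum]
  refine prod_congr rfl fun S hS => ?_
  rw [h S hS, ← exp_int_mul]
  push_cast
  rfl

theorem hasProd_exp_sampling {j : ℕ} {c z : ℂ} {r A : ℕ → ℂ} {S : Finset ℕ}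
    (hA : ∀ i ∈ S, HasSum (fun n : ℕ+ => X i n (r i) ^ j) (A i)) :
    HasProd (fun ν : {x // x ∈ S} → ℕ+ =>
        cexp (c * ((∏ i : {x // x ∈ S}, X i.1 (ν i : ℕ) (r i.1)) * z) ^ j))
      (cexp (c * z ^ j * ∏ i ∈ S, A i)) := by
  have hfubini := hasSum_pi_prod (g := fun (i : {x // x ∈ S}) (n : ℕ+) => X i.1 n (r i.1) ^ j)
    fun i => (hA i.1 i.2).summable.norm
  rw [← prod_coe_sort S A, prod_congr rfl fun i _ => (hA i.1 i.2).tsum_eq.symm]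
  convert (hfubini.mul_left (c * z ^ j)).cexp using 1
  ext ν
  rw [Function.comp_apply, prod_pow]
  ring_nf

/-- for `1 ≤ j ≤ k`, the function factor `f_j(w) = exp (c * w^j)`, and ratios
`r_i` with `|r_i| > 1` for `i ∈ {1,…,k}`, each geometric sampling product involved
converges unconditionally and
`exp (c * z^j) = ∏_{m=1}^{k} Q(f_j, F*_{max=m}, z)`. -/
theorem stmt_4 (j k : ℕ) (hj : 1 ≤ j) (hjk : j ≤ k) (c z : ℂ)
    (r : ℕ → ℂ) (hr : ∀ i ∈ Finset.Icc 1 k, 1 < ‖r i‖) :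
    (∀ m ∈ Finset.Icc 1 k, ∀ S ∈ Fmax m,
      Multipliable (fun ν : {x // x ∈ S} → ℕ+ =>
        Complex.exp (c * ((∏ i : {x // x ∈ S}, X i.1 (ν i : ℕ) (r i.1)) * z) ^ j))) ∧
    Complex.exp (c * z ^ j) =
      ∏ m ∈ Finset.Icc 1 k, Q (fun w => Complex.exp (c * w ^ j)) r (Fmax m) z := by
  have hj0 : j ≠ 0 := by omega
  have hjmem : j ∈ Icc 1 k := mem_Icc.2 ⟨hj, hjk⟩
  set A : ℕ → ℂ := fun i => ∑' n : ℕ+, X i n (r i) ^ j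
  have hA (i) (hi : i ∈ Icc 1 k) : HasSum (fun n : ℕ+ => X i n (r i) ^ j) (A i) :=
    (hasSum_X_pow i (hr i hi) hj0).summable.hasSum
  have hAj : A j = 1 := (hasSum_X_pow_self (hr j hjmem) hj0).tsum_eq
  have hsub (m) (hm : m ∈ Icc 1 k) (S) (hS : S ∈ Fmax m) : S ⊆ Icc 1 k :=
    (mem_powerset.1 (mem_filter.1 hS).1).trans (Icc_subset_Icc_right (mem_Icc.1 hm).2)
  have hP (m) (hm : m ∈ Icc 1 k) (S) (hS : S ∈ Fmax m) :
      HasProd (fun ν : {x // x ∈ S} → ℕ+ =>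
        cexp (c * ((∏ i : {x // x ∈ S}, X i.1 (ν i : ℕ) (r i.1)) * z) ^ j))
        (cexp (c * z ^ j * ∏ i ∈ S, A i)) :=
    hasProd_exp_sampling fun i hi => hA i (hsub m hm S hS hi)
  refine ⟨fun m hm S hS => (hP m hm S hS).multipliable, ?_⟩
  have hQ (m) (hm : m ∈ Icc 1 k) : Q (fun w => cexp (c * w ^ j)) r (Fmax m) z =
      cexp (∑ S ∈ Fmax m, (-1) ^ (#S + 1) * (c * z ^ j * ∏ i ∈ S, A i)) :=
    Q_eq_exp_sum _ fun S hS => (hP m hm S hS).tprod_eq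
  rw [prod_congr rfl hQ, ← exp_sum]
  simp_rw [mul_left_comm _ (c * z ^ j), ← mul_sum]
  rw [sum_Icc_sum_Fmax_alternating_prod, prod_eq_zero hjmem (by rw [hAj, sub_self]), sub_zero,
    mul_one]
end
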